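/- arXiv:0904.1458 — 11 statements merged into one kernel-verified Lean document; each statement's English description precedes it below -/
import Mathlib

section
/- If X is a paracompact topological space and G is a topological group, then for any open neighborhood U of the graph of the constant map x ↦ e in X × G, there exists an open neighborhood V of this graph such that the set V·V = {(x, yz) : (x,y) ∈ V, (x,z) ∈ V} is contained in U. -/
/-!
By continuity of multiplication, every point `x` has an open neighbourhood `A x` and an open
neighbourhood `N x` of `1` with `A x × (N x · N x) ⊆ U`. Paracompactness gives a locally finite
refinement `v` of the cover `A`. Near each point only finitely many `v i` matter, so the finite
intersection of the corresponding `N i` is still a neighbourhood of `1`; gluing these local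
products gives an open `V ⊇ X × {1}` whose fibre over `q` lies in `N i` whenever `q ∈ v i`.
Both factors of a product in `V·V` over `q` then lie in the same `N i`, with `q ∈ A i`.
-/

open Set

theorem exists_isOpen_nhds_one_mul_subset {X M : Type*} [TopologicalSpace X]
    [TopologicalSpace M] [MulOneClass M] [ContinuousMul M] {U : Set (X × M)} (hU : IsOpen U)
    {x : X} (hx : (x, (1 : M)) ∈ U) :
    ∃ A : Set X, ∃ N : Set M, IsOpen A ∧ x ∈ A ∧ IsOpen N ∧ (1 : M) ∈ N ∧
      ∀ q ∈ A, ∀ y ∈ N, ∀ z ∈ N, (q, y * z) ∈ U := by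
  have hpre : IsOpen ((fun p : X × M × M => (p.1, p.2.1 * p.2.2)) ⁻¹' U) :=
    hU.preimage (by fun_prop)
  obtain ⟨A, T, hA, hT, hxA, hT1, hAT⟩ :=
    isOpen_prod_iff.mp hpre x (1, 1) (by simpa only [mem_preimage, mul_one] using hx)
  obtain ⟨N₁, N₂, hN₁, hN₂, h1N₁, h1N₂, hNT⟩ := isOpen_prod_iff.mp hT 1 1 hT1
  refine ⟨A, N₁ ∩ N₂, hA, hxA, hN₁.inter hN₂, ⟨h1N₁, h1N₂⟩, fun q hq y hy z hz => ?_⟩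
  exact hAT (mk_mem_prod hq (hNT (mk_mem_prod hy.1 hz.2)))

theorem LocallyFinite.exists_isOpen_forall_mem {ι X Y : Type*} [TopologicalSpace X]
    [TopologicalSpace Y] {v : ι → Set X} (hv : LocallyFinite v) {N : ι → Set Y}
    (hN : ∀ i, IsOpen (N i)) {y₀ : Y} (hy₀ : ∀ i, y₀ ∈ N i) :
    ∃ V : Set (X × Y), IsOpen V ∧ (∀ x, (x, y₀) ∈ V) ∧
      ∀ p ∈ V, ∀ i, p.1 ∈ v i → p.2 ∈ N i := by
  choose t ht htfin using hv
  refine ⟨⋃ x, interior (t x) ×ˢ ⋂ i ∈ {i | (v i ∩ t x).Nonempty}, N i,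
    isOpen_iUnion fun x => isOpen_interior.prod ((htfin x).isOpen_biInter fun i _ => hN i),
    fun x => mem_iUnion.2 ⟨x, mem_interior_iff_mem_nhds.2 (ht x), mem_iInter₂.2 fun i _ => hy₀ i⟩,
    fun p hp i hi => ?_⟩
  obtain ⟨x, hpt, hpN⟩ := mem_iUnion.1 hp
  exact mem_iInter₂.1 hpN i ⟨p.1, hi, interior_subset hpt⟩

theorem stmt0_general {X G : Type*} [TopologicalSpace X] [ParacompactSpace X]
    [TopologicalSpace G] [Group G] [IsTopologicalGroup G]
    (U : Set (X × G)) (hU : IsOpen U) (hgr : ∀ x : X, (x, (1 : G)) ∈ U) :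
    ∃ V : Set (X × G), IsOpen V ∧ (∀ x : X, (x, (1 : G)) ∈ V) ∧
      {p : X × G | ∃ y z : G, (p.1, y) ∈ V ∧ (p.1, z) ∈ V ∧ p.2 = y * z} ⊆ U := by
  choose A N hA hxA hN h1N hAN using fun x => exists_isOpen_nhds_one_mul_subset hU (hgr x)
  obtain ⟨v, -, hv_cover, hv_lf, hvA⟩ :=
    precise_refinement A hA (iUnion_eq_univ_iff.2 fun x => ⟨x, hxA x⟩)
  obtain ⟨V, hV, h1V, hVN⟩ := hv_lf.exists_isOpen_forall_mem hN h1N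
  refine ⟨V, hV, h1V, ?_⟩
  rintro ⟨q, _⟩ ⟨y, z, hy, hz, rfl⟩
  obtain ⟨i, hqi⟩ := iUnion_eq_univ_iff.1 hv_cover q
  exact hAN i q (hvA i hqi) y (hVN _ hy i hqi) z (hVN _ hz i hqi)

/-- If X is a paracompact (Hausdorff) space and G a topological group,
then any open neighborhood U of the graph of the constant map x ↦ e contains a
neighborhood V of that graph with V·V ⊆ U, where
V·V = {(x, yz) : (x,y) ∈ V, (x,z) ∈ V}. -/
theorem stmt0 {X G : Type*} [TopologicalSpace X] [T2Space X] [ParacompactSpace X]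
    [TopologicalSpace G] [Group G] [IsTopologicalGroup G]
    (U : Set (X × G)) (hU : IsOpen U) (hgr : ∀ x : X, (x, (1 : G)) ∈ U) :
    ∃ V : Set (X × G), IsOpen V ∧ (∀ x : X, (x, (1 : G)) ∈ V) ∧
      {p : X × G | ∃ y z : G, (p.1, y) ∈ V ∧ (p.1, z) ∈ V ∧ p.2 = y * z} ⊆ U :=
  stmt0_general U hU hgr
end

section
/- Let X and G be topological spaces with G a topological group. On C(X,G) with the Whitney (graph) topology, the inversion map f ↦ f⁻¹ (pointwise inversion) is continuous. -/
/-- The Whitney (graph) topology on `C(X, Y)`, generated by the sets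
`⟨U⟩ = {f | graph f ⊆ U}` for `U` open in `X × Y`. -/
def whitneyTopology (X Y : Type*) [TopologicalSpace X] [TopologicalSpace Y] :
    TopologicalSpace C(X, Y) :=
  TopologicalSpace.generateFrom
    {S | ∃ U : Set (X × Y), IsOpen U ∧ S = {f : C(X, Y) | ∀ x : X, (x, f x) ∈ U}}

theorem isOpen_whitneyTopology_setOf_graph_subset {X Y : Type*} [TopologicalSpace X]
    [TopologicalSpace Y] {U : Set (X × Y)} (hU : IsOpen U) :
    @IsOpen C(X, Y) (whitneyTopology X Y) {f : C(X, Y) | ∀ x, (x, f x) ∈ U} :=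
  TopologicalSpace.isOpen_generateFrom_of_mem ⟨U, hU, rfl⟩

/-- The preimage of `⟨U⟩` under `f ↦ g ∘ f` is `⟨(id × g)⁻¹ U⟩`. -/
theorem continuous_postcomp_whitneyTopology {X Y Z : Type*} [TopologicalSpace X]
    [TopologicalSpace Y] [TopologicalSpace Z] (g : C(Y, Z)) :
    @Continuous C(X, Y) C(X, Z) (whitneyTopology X Y) (whitneyTopology X Z) g.comp := by
  refine continuous_generateFrom_iff.mpr ?_
  rintro _ ⟨U, hU, rfl⟩
  exact isOpen_whitneyTopology_setOf_graph_subset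
    (hU.preimage (continuous_fst.prodMk (g.continuous.comp continuous_snd)))

/-- pointwise inversion is continuous on `C(X, G)` with the Whitney topology. -/
theorem stmt1 {X G : Type*} [TopologicalSpace X] [TopologicalSpace G] [Group G]
    [IsTopologicalGroup G] :
    @Continuous C(X, G) C(X, G) (whitneyTopology X G) (whitneyTopology X G)
      (fun f => f⁻¹) :=
  continuous_postcomp_whitneyTopology (X := X) ⟨fun g : G => g⁻¹, continuous_inv⟩
end

section
/- Let X and G be topological spaces with G a topological group, and fix f ∈ C(X,G). On C(X,G) with the Whitney (graph) topology, the left multiplication map g ↦ f·g (pointwise product) is continuous. -/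
open Topology

theorem whitneyTopology_isOpen_setOf_graph_subset {X Y : Type*} [TopologicalSpace X]
    [TopologicalSpace Y] {U : Set (X × Y)} (hU : IsOpen U) :
    IsOpen[whitneyTopology X Y] {f : C(X, Y) | ∀ x, (x, f x) ∈ U} :=
  TopologicalSpace.isOpen_generateFrom_of_mem ⟨U, hU, rfl⟩

/-- `T` pulls `⟨U⟩` back to `⟨U'⟩`, where `U'` is the preimage of `U` under the continuous map
`(x, y) ↦ (x, Φ x y)` of `X × Y`. -/
theorem whitneyTopology_continuous_of_apply_eq {X Y Z : Type*} [TopologicalSpace X]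
    [TopologicalSpace Y] [TopologicalSpace Z] {Φ : X → Y → Z}
    (hΦ : Continuous fun p : X × Y => Φ p.1 p.2) {T : C(X, Y) → C(X, Z)}
    (hT : ∀ g x, T g x = Φ x (g x)) :
    Continuous[whitneyTopology X Y, whitneyTopology X Z] T := by
  refine continuous_generateFrom_iff.mpr ?_
  rintro _ ⟨U, hU, rfl⟩
  have hU' : IsOpen ((fun p : X × Y => (p.1, Φ p.1 p.2)) ⁻¹' U) :=
    hU.preimage (continuous_fst.prodMk hΦ)
  convert whitneyTopology_isOpen_setOf_graph_subset hU' using 1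
  ext g
  simp only [Set.mem_preimage, Set.mem_ofPred_eq, hT]

/-- left multiplication by a fixed `f` is continuous on `C(X, G)`
with the Whitney topology. -/
theorem stmt2 {X G : Type*} [TopologicalSpace X] [TopologicalSpace G] [Group G]
    [IsTopologicalGroup G] (f : C(X, G)) :
    @Continuous C(X, G) C(X, G) (whitneyTopology X G) (whitneyTopology X G)
      (fun g => f * g) :=
  whitneyTopology_continuous_of_apply_eq (Φ := fun x y => f x * y)
    ((f.continuous.comp continuous_fst).mul continuous_snd) fun _ _ => rfl
end

section
/- If X is a paracompact Hausdorff space and G is a topological group, then C(X,G) with the Whitney (graph) topology and pointwise multiplication is a topological group. -/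
open Set Topology

/-! Postcomposition with a continuous map is continuous for Whitney topologies on any domain,
so inversion is harmless, and multiplication is the pairing `(f, g) ↦ (f, g) ∈ C(X, G × G)`
followed by postcomposition with `G × G → G`. Only the pairing needs paracompactness. An open
`U ⊆ X × (Y × Z)` containing the graph of `(f, g)` contains, near each `x`, a box
`N x × A x × B x` with `f (N x) ⊆ A x` and `g (N x) ⊆ B x`. Refining the `N x` to a locally
finite closed cover `c x ⊆ N x`, the set `{(y, a) | ∀ x, y ∈ c x → a ∈ A x}` is open by local
finiteness; if the graph of `f'` lies in it and that of `g'` in its analogue for `B`, then the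
graph of `(f', g')` lies in `U`. -/

section Whitney

variable {X Y Z : Type*} [TopologicalSpace X] [TopologicalSpace Y] [TopologicalSpace Z]

/-- The basic set `⟨U⟩` of the Whitney topology. -/
def graphIn (U : Set (X × Y)) : Set C(X, Y) := {f | ∀ x, (x, f x) ∈ U}

theorem continuous_whitney_iff {T : Type*} [TopologicalSpace T] {F : T → C(X, Y)} :
    Continuous[_, whitneyTopology X Y] F ↔
      ∀ U : Set (X × Y), IsOpen U → IsOpen (F ⁻¹' graphIn U) := by
  refine continuous_generateFrom_iff.trans ⟨fun h U hU => h _ ⟨U, hU, rfl⟩, ?_⟩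
  rintro h _ ⟨U, hU, rfl⟩
  exact h U hU

theorem Continuous.whitney_comp {T : Type*} [TopologicalSpace T] {F : T → C(X, Y)}
    (hF : Continuous[_, whitneyTopology X Y] F) (φ : C(Y, Z)) :
    Continuous[_, whitneyTopology X Z] fun t => φ.comp (F t) :=
  continuous_whitney_iff.2 fun _ hU =>
    continuous_whitney_iff.1 hF _ (hU.preimage (continuous_id.prodMap φ.continuous))

theorem precise_closed_refinement [ParacompactSpace X] [NormalSpace X] {ι : Type*}
    (u : ι → Set X) (hu : ∀ i, IsOpen (u i)) (hcover : ⋃ i, u i = univ) :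
    ∃ c : ι → Set X, (∀ i, IsClosed (c i)) ∧ LocallyFinite c ∧ ⋃ i, c i = univ ∧
      ∀ i, c i ⊆ u i := by
  obtain ⟨v, hvo, hvcover, hvlf, hvu⟩ := precise_refinement u hu hcover
  obtain ⟨w, hwcover, -, hwv⟩ := exists_iUnion_eq_closure_subset hvo
    (fun x => hvlf.point_finite x) hvcover
  refine ⟨fun i => closure (w i), fun _ => isClosed_closure, hvlf.subset hwv, ?_,
    fun i => (hwv i).trans (hvu i)⟩
  exact univ_subset_iff.1 (hwcover.symm.subset.trans (iUnion_mono fun _ => subset_closure))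

theorem LocallyFinite.isOpen_setOf_forall_mem_imp {ι : Type*} {c : ι → Set X}
    (hc : LocallyFinite c) (hc_closed : ∀ i, IsClosed (c i)) {A : ι → Set Y}
    (hA : ∀ i, IsOpen (A i)) : IsOpen {p : X × Y | ∀ i, p.1 ∈ c i → p.2 ∈ A i} := by
  have hbad : IsClosed (⋃ i, c i ×ˢ (A i)ᶜ) :=
    ((hc.preimage_continuous continuous_fst).subset fun i => prod_subset_preimage_fst _ _)
      |>.isClosed_iUnion fun i => (hc_closed i).prod (hA i).isClosed_compl
  convert hbad.isOpen_compl using 1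
  ext p
  simp

theorem exists_graphIn_prodMk_subset [ParacompactSpace X] [NormalSpace X]
    {U : Set (X × Y × Z)} (hU : IsOpen U) {f : C(X, Y)} {g : C(X, Z)}
    (hfg : f.prodMk g ∈ graphIn U) :
    ∃ V W, IsOpen V ∧ IsOpen W ∧ f ∈ graphIn V ∧ g ∈ graphIn W ∧
      ∀ f' ∈ graphIn V, ∀ g' ∈ graphIn W, ContinuousMap.prodMk f' g' ∈ graphIn U := by
  have hbox : ∀ x, ∃ N : Set X, ∃ A : Set Y, ∃ B : Set Z, IsOpen N ∧ IsOpen A ∧ IsOpen B ∧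
      x ∈ N ∧ f x ∈ A ∧ g x ∈ B ∧ N ×ˢ A ×ˢ B ⊆ U := by
    intro x
    obtain ⟨N, T, hN, hT, hxN, hfgT, hNT⟩ := isOpen_prod_iff.1 hU x (f x, g x) (hfg x)
    obtain ⟨A, B, hA, hB, hfA, hgB, hAB⟩ := isOpen_prod_iff.1 hT _ _ hfgT
    exact ⟨N, A, B, hN, hA, hB, hxN, hfA, hgB, (prod_mono subset_rfl hAB).trans hNT⟩
  choose N A B hN hA hB hxN hfA hgB hNAB using hbox
  obtain ⟨c, hc_closed, hc_lf, hc_cover, hcN⟩ :=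
    precise_closed_refinement (fun x => N x ∩ f ⁻¹' A x ∩ g ⁻¹' B x)
      (fun x => ((hN x).inter ((hA x).preimage f.continuous)).inter
        ((hB x).preimage g.continuous))
      (eq_univ_of_forall fun x => mem_iUnion.2 ⟨x, ⟨hxN x, hfA x⟩, hgB x⟩)
  refine ⟨_, _, hc_lf.isOpen_setOf_forall_mem_imp hc_closed hA,
    hc_lf.isOpen_setOf_forall_mem_imp hc_closed hB, fun y x hy => (hcN x hy).1.2,
    fun y x hy => (hcN x hy).2, fun f' hf' g' hg' y => ?_⟩
  obtain ⟨x, hy⟩ := mem_iUnion.1 (hc_cover.symm.subset (mem_univ y))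
  exact hNAB x ⟨(hcN x hy).1.1, hf' y x hy, hg' y x hy⟩

theorem Continuous.whitney_prodMk [ParacompactSpace X] [NormalSpace X] {T : Type*}
    [TopologicalSpace T] {F : T → C(X, Y)} {G : T → C(X, Z)}
    (hF : Continuous[_, whitneyTopology X Y] F) (hG : Continuous[_, whitneyTopology X Z] G) :
    Continuous[_, whitneyTopology X (Y × Z)] fun t => (F t).prodMk (G t) := by
  refine continuous_whitney_iff.2 fun _ hU => isOpen_iff_mem_nhds.2 fun t ht => ?_
  obtain ⟨V, W, hV, hW, hFV, hGW, hVW⟩ := exists_graphIn_prodMk_subset hU ht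
  filter_upwards [(continuous_whitney_iff.1 hF V hV).mem_nhds hFV,
    (continuous_whitney_iff.1 hG W hW).mem_nhds hGW] with s hFs hGs
  exact hVW _ hFs _ hGs

end Whitney

/-- for X paracompact Hausdorff and G a topological group, `C(X, G)`
with the Whitney topology and pointwise operations is a topological group. -/
theorem stmt3 {X G : Type*} [TopologicalSpace X] [T2Space X] [ParacompactSpace X]
    [TopologicalSpace G] [Group G] [IsTopologicalGroup G] :
    @IsTopologicalGroup C(X, G) (whitneyTopology X G) _ := by
  let := whitneyTopology X G
  have hmul : Continuous fun p : C(X, G) × C(X, G) => p.1 * p.2 :=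
    (continuous_fst.whitney_prodMk continuous_snd).whitney_comp
      ⟨fun q : G × G => q.1 * q.2, continuous_mul⟩
  have hinv : Continuous fun f : C(X, G) => f⁻¹ :=
    continuous_id.whitney_comp ⟨fun a : G => a⁻¹, continuous_inv⟩
  exact { continuous_mul := hmul, continuous_inv := hinv }
end

section
/- Let (Gᵢ)ᵢ∈ℕ be an increasing sequence of closed subgroups of a topological group G with union G. Then the multiplication map p : ⊡ᵢ Gᵢ → G, p(x₁,...,xₙ, e, e, ...) = x₁x₂⋯xₙ, from the small box product to G, is continuous. -/
/-- The box topology on a countable product, generated by boxes `∏ᵢ Uᵢ`. -/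
def boxTopology (X : ℕ → Type*) [∀ i, TopologicalSpace (X i)] :
    TopologicalSpace (∀ i, X i) :=
  TopologicalSpace.generateFrom
    {S | ∃ U : ∀ i, Set (X i), (∀ i, IsOpen (U i)) ∧ S = Set.pi Set.univ U}

/-- The small box product of a tower of subgroups: sequences that are
eventually the identity. -/
abbrev SmallBox {G : Type*} [Group G] (H : ℕ → Subgroup G) : Type _ :=
  {x : ∀ i, H i // ∃ N, ∀ i ≥ N, x i = 1}

/-- The topology on the small box product: the subspace topology of the box
topology. -/
def smallBoxTop {G : Type*} [Group G] [TopologicalSpace G] (H : ℕ → Subgroup G) :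
    TopologicalSpace (SmallBox H) :=
  TopologicalSpace.induced Subtype.val (boxTopology fun i => H i)

/-- The multiplication map `p : ⊡ᵢ Gᵢ → G`, `p(x₁,…,xₙ,e,e,…) = x₁x₂⋯xₙ`. -/
noncomputable def boxMulMap {G : Type*} [Group G] (H : ℕ → Subgroup G)
    (x : SmallBox H) : G :=
  ((List.range x.2.choose).map fun i => ((x.1 i : G))).prod

/-- The identity element `(e, e, …)` of the small box product. -/
def boxOne {G : Type*} [Group G] (H : ℕ → Subgroup G) : SmallBox H :=
  ⟨1, 0, fun _ _ => rfl⟩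

/-!
Fix `x` with `xᵢ = e` for `i ≥ N` and a neighbourhood `W` of `p x = x₀ ⋯ x_{N-1}`.
Continuity of multiplication gives neighbourhoods `Uᵢ ∋ xᵢ` (`i < N`) and `V ∋ e` with
`U₀ ⋯ U_{N-1} · V ⊆ W`. Choosing neighbourhoods `V = D₀ ⊇ D₁ ⊇ ⋯` of `e` with
`D_{k+1} D_{k+1} ⊆ D_k`, every finite product `D₁ D₂ ⋯ D_m` lies in `V`, so the box
`∏_{i<N} Uᵢ × ∏ₖ D_{k+1}` is mapped into `W`.
-/

open Filter Topology

section RangeProd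

variable {M : Type*} [Monoid M]

def rangeProd (v : ℕ → M) (n : ℕ) : M := ((List.range n).map v).prod

theorem rangeProd_succ (v : ℕ → M) (n : ℕ) : rangeProd v (n + 1) = rangeProd v n * v n :=
  List.prod_range_succ v n

theorem rangeProd_add (v : ℕ → M) (n m : ℕ) :
    rangeProd v (n + m) = rangeProd v n * rangeProd (fun i => v (n + i)) m := by
  simp [rangeProd, List.range_add, Function.comp_def]

theorem rangeProd_eq_of_le {v : ℕ → M} {n m : ℕ} (h : n ≤ m) (hv : ∀ i ≥ n, v i = 1) :
    rangeProd v m = rangeProd v n := by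
  obtain ⟨k, rfl⟩ := Nat.exists_eq_add_of_le h
  have htail : rangeProd (fun i => v (n + i)) k = 1 := by
    refine List.prod_eq_one ?_
    simp only [List.mem_map, List.mem_range]
    rintro _ ⟨i, -, rfl⟩
    exact hv _ (Nat.le_add_right n i)
  rw [rangeProd_add, htail, mul_one]

variable [TopologicalSpace M] [ContinuousMul M]

theorem continuous_rangeProd (n : ℕ) : Continuous fun v : ℕ → M => rangeProd v n :=
  continuous_list_prod _ fun i _ => continuous_apply i

theorem exists_nhds_one_forall_rangeProd_mem {V : Set M} (hV : V ∈ 𝓝 (1 : M)) :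
    ∃ C : ℕ → Set M, (∀ i, C i ∈ 𝓝 (1 : M)) ∧
      ∀ u : ℕ → M, (∀ i, u i ∈ C i) → ∀ n, rangeProd u n ∈ V := by
  choose! half hhalf_mem hhalf using
    fun S (hS : S ∈ 𝓝 (1 : M)) => exists_nhds_one_split hS
  set D : ℕ → Set M := fun k => half^[k] V
  have hD_mem : ∀ k, D k ∈ 𝓝 (1 : M) := fun k => by
    induction k with
    | zero => exact hV
    | succ k ih => simpa [D, Function.iterate_succ_apply'] using hhalf_mem _ ih
  have hD_mul : ∀ k, ∀ a ∈ D (k + 1), ∀ b ∈ D (k + 1), a * b ∈ D k := fun k => by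
    simpa [D, Function.iterate_succ_apply'] using hhalf _ (hD_mem k)
  refine ⟨fun i => D (i + 1), fun i => hD_mem _, fun u hu n => ?_⟩
  -- The induction step absorbs `uₙ` into `d`: `uₙ · D (n+1) ⊆ D (n+1) · D (n+1) ⊆ D n`.
  suffices ∀ n, ∀ d ∈ D n, rangeProd u n * d ∈ V by
    simpa only [mul_one] using this n 1 (mem_of_mem_nhds (hD_mem n))
  intro n
  induction n with
  | zero => simp [D, rangeProd]
  | succ n ih =>
    intro d hd
    rw [rangeProd_succ, mul_assoc]
    exact ih _ (hD_mul n _ (hu n) _ hd)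

theorem exists_nhds_box_forall_rangeProd_mem {v : ℕ → M} {N : ℕ} (hv : ∀ i ≥ N, v i = 1)
    {W : Set M} (hW : W ∈ 𝓝 (rangeProd v N)) :
    ∃ B : ℕ → Set M, (∀ i, B i ∈ 𝓝 (v i)) ∧
      ∀ u : ℕ → M, (∀ i, u i ∈ B i) → ∀ n ≥ N, rangeProd u n ∈ W := by
  have hW' : (fun p : (ℕ → M) × M => rangeProd p.1 N * p.2) ⁻¹' W ∈ 𝓝 (v, 1) := by
    refine (((continuous_rangeProd N).comp continuous_fst).mul continuous_snd).continuousAt ?_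
    simpa using hW
  obtain ⟨A, hA, V, hV, hAV⟩ := mem_nhds_prod_iff.1 hW'
  rw [nhds_pi, Filter.mem_pi] at hA
  obtain ⟨I, -, U, hU, hUA⟩ := hA
  obtain ⟨C, hC, hCV⟩ := exists_nhds_one_forall_rangeProd_mem hV
  refine ⟨fun i => U i ∩ if i < N then Set.univ else C (i - N), fun i => ?_, ?_⟩
  · refine inter_mem (hU i) ?_
    split_ifs with hi
    · exact univ_mem
    · simpa [hv i (not_lt.1 hi)] using hC (i - N)
  · intro u hu n hn
    obtain ⟨k, rfl⟩ := Nat.exists_eq_add_of_le hn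
    rw [rangeProd_add]
    refine hAV (Set.mk_mem_prod (hUA fun i _ => (hu i).1)
      (hCV (fun i => u (N + i)) (fun i => ?_) k))
    simpa using (hu (N + i)).2

end RangeProd

theorem isOpen_pi_univ_boxTopology {X : ℕ → Type*} [∀ i, TopologicalSpace (X i)]
    {U : ∀ i, Set (X i)} (hU : ∀ i, IsOpen (U i)) :
    IsOpen[boxTopology X] (Set.univ.pi U) :=
  TopologicalSpace.GenerateOpen.basic _ ⟨U, hU, rfl⟩

section SmallBox

variable {G : Type*} [Group G] {H : ℕ → Subgroup G}

theorem boxMulMap_eq_rangeProd (x : SmallBox H) {n : ℕ} (hn : ∀ i ≥ n, x.1 i = 1) :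
    boxMulMap H x = rangeProd (fun i => (x.1 i : G)) n := by
  have hx : ∀ m, (∀ i ≥ m, x.1 i = 1) → ∀ i ≥ m, (x.1 i : G) = 1 :=
    fun m hm i hi => by simp [hm i hi]
  change rangeProd _ x.2.choose = _
  rw [← rangeProd_eq_of_le (le_max_left _ n) (hx _ x.2.choose_spec),
    rangeProd_eq_of_le (le_max_right _ n) (hx _ hn)]

variable [TopologicalSpace G]

theorem setOf_forall_mem_mem_nhds_smallBox (x : SmallBox H) {B : ℕ → Set G}
    (hB : ∀ i, B i ∈ 𝓝 (x.1 i : G)) :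
    {y : SmallBox H | ∀ i, (y.1 i : G) ∈ B i} ∈ @nhds _ (smallBoxTop H) x := by
  let := smallBoxTop H
  refine mem_of_superset (IsOpen.mem_nhds (s := Subtype.val ⁻¹'
    Set.univ.pi fun i => Subtype.val ⁻¹' interior (B i)) ?_ ?_) ?_
  · exact ⟨_, isOpen_pi_univ_boxTopology fun i =>
      isOpen_interior.preimage continuous_subtype_val, rfl⟩
  · exact fun i _ => mem_interior_iff_mem_nhds.2 (hB i)
  · exact fun y hy i => interior_subset (hy i trivial)

end SmallBox

theorem stmt6_general {G : Type*} [Group G] [TopologicalSpace G] [IsTopologicalGroup G]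
    (H : ℕ → Subgroup G) :
    @Continuous (SmallBox H) G (smallBoxTop H) _ (boxMulMap H) := by
  let := smallBoxTop H
  refine continuous_iff_continuousAt.2 fun x W hW => mem_map.2 ?_
  obtain ⟨N, hN⟩ := x.2
  obtain ⟨B, hB, hBW⟩ := exists_nhds_box_forall_rangeProd_mem (v := fun i => (x.1 i : G))
    (fun i hi => by simp [hN i hi]) (boxMulMap_eq_rangeProd x hN ▸ hW)
  filter_upwards [setOf_forall_mem_mem_nhds_smallBox x hB] with y hy
  obtain ⟨Ny, hNy⟩ := y.2
  rw [Set.mem_preimage, boxMulMap_eq_rangeProd y fun i hi => hNy i (le_of_max_le_right hi)]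
  exact hBW _ hy _ (le_max_left N Ny)

/-- for a tower (Gᵢ) of closed subgroups of a topological group G
with union G, the multiplication map `p : ⊡ᵢ Gᵢ → G` is continuous for the
small box topology. -/
theorem stmt6 {G : Type*} [Group G] [TopologicalSpace G] [IsTopologicalGroup G]
    (H : ℕ → Subgroup G) (hcl : ∀ i, IsClosed (H i : Set G)) (hmono : Monotone H)
    (hunion : ∀ g : G, ∃ i, g ∈ H i) :
    @Continuous (SmallBox H) G (smallBoxTop H) _ (boxMulMap H) :=
  stmt6_general H
end

section
/- Let (Gᵢ) be a tower of closed subgroups of a topological group G with union G, and p : ⊡ᵢ Gᵢ → G the multiplication map. If p admits a local section at e (i.e., there is a neighborhood V of e in G and a continuous map s : V → ⊡ᵢ Gᵢ with p∘s = id_V), then p is an open map. -/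
/-!
For a finitely supported `x`, the concatenation `x ⧺ z` (`x` on the first `N` coordinates, `z`
shifted by `N` after them) satisfies `p(x ⧺ z) = p(x) p(z)` and depends continuously on `z` in the
box topology. So a local section through the identity `e` of `⊡ᵢ Gᵢ` yields, by concatenation,
one through any `x` over the translate `p(x) V`, and the image of an open set containing `x` then
contains a neighbourhood of `p(x)`.

The given section need not pass through `e`: `t = s(e)` only satisfies `p(t) = e`. It is
corrected by the gauge transformation `z_k ↦ T_k z_k T_{k+1}⁻¹`, `T_k = t₀ ⋯ t_{k-1}`: this is
continuous coordinatewise, sends `t` to `e`, and preserves `p` because the factors telescope and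
`T_0 = e = T_k` for large `k`.
-/

open Filter Topology

namespace SmallBox

variable {G : Type*} [Group G] {H : ℕ → Subgroup G}

def prodUpTo (x : SmallBox H) (K : ℕ) : G :=
  ((List.range K).map fun i => (x.1 i : G)).prod

@[simp]
lemma prodUpTo_zero (x : SmallBox H) : x.prodUpTo 0 = 1 := rfl

lemma prodUpTo_succ (x : SmallBox H) (K : ℕ) :
    x.prodUpTo (K + 1) = x.prodUpTo K * x.1 K := by
  simp [prodUpTo, List.range_succ]

lemma prodUpTo_add (x : SmallBox H) (K L : ℕ) :
    x.prodUpTo (K + L) =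
      x.prodUpTo K * ((List.range L).map fun j => (x.1 (K + j) : G)).prod := by
  simp [prodUpTo, List.range_add, Function.comp_def]

lemma prodUpTo_mem (hmono : Monotone H) (x : SmallBox H) {K k : ℕ} (hK : K ≤ k + 1) :
    x.prodUpTo K ∈ H k := by
  refine Subgroup.list_prod_mem _ fun g hg => ?_
  obtain ⟨i, hi, rfl⟩ := List.mem_map.mp hg
  exact hmono (by grind) (x.1 i).2

lemma prodUpTo_eq_of_le (x : SmallBox H) {K L : ℕ} (hKL : K ≤ L) (hK : ∀ i ≥ K, x.1 i = 1) :
    x.prodUpTo L = x.prodUpTo K := by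
  obtain ⟨d, rfl⟩ := Nat.exists_eq_add_of_le hKL
  rw [prodUpTo_add, List.prod_eq_one, mul_one]
  simp +contextual [hK]

lemma boxMulMap_eq_prodUpTo (x : SmallBox H) {K : ℕ} (hK : ∀ i ≥ K, x.1 i = 1) :
    boxMulMap H x = x.prodUpTo K := by
  rcases le_total K x.2.choose with h | h
  · exact x.prodUpTo_eq_of_le h hK
  · exact (x.prodUpTo_eq_of_le h x.2.choose_spec).symm

lemma prodUpTo_eq_one {t : SmallBox H} (ht : boxMulMap H t = 1) {K : ℕ}
    (hK : ∀ i ≥ K, t.1 i = 1) : t.prodUpTo K = 1 := by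
  rw [← boxMulMap_eq_prodUpTo t hK, ht]

variable (hmono : Monotone H)

def append (x : SmallBox H) (N : ℕ) (z : SmallBox H) : SmallBox H :=
  ⟨fun i => if i < N then x.1 i else ⟨z.1 (i - N), hmono (Nat.sub_le i N) (z.1 (i - N)).2⟩, by
    obtain ⟨K, hK⟩ := z.2
    exact ⟨N + K, fun i hi => by simp [show ¬ i < N by omega, hK (i - N) (by omega)]⟩⟩

section Append

variable (x : SmallBox H) {N : ℕ}

lemma append_apply_of_lt (z : SmallBox H) {i : ℕ} (hi : i < N) :
    (x.append hmono N z).1 i = x.1 i := if_pos hi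

lemma append_apply_add (z : SmallBox H) (j : ℕ) :
    (x.append hmono N z).1 (N + j) = Subgroup.inclusion (hmono (Nat.le_add_left j N)) (z.1 j) := by
  ext
  simp only [append, show ¬ N + j < N by omega, if_false, Subgroup.coe_inclusion]
  rw [Nat.add_sub_cancel_left]

lemma append_boxOne (hx : ∀ i ≥ N, x.1 i = 1) : x.append hmono N (boxOne H) = x := by
  ext i : 2
  by_cases hi : i < N
  · exact x.append_apply_of_lt hmono _ hi
  · simp [append, hi, hx i (not_lt.mp hi), boxOne]

lemma boxMulMap_append (hx : ∀ i ≥ N, x.1 i = 1) (z : SmallBox H) :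
    boxMulMap H (x.append hmono N z) = boxMulMap H x * boxMulMap H z := by
  obtain ⟨K, hK⟩ := z.2
  have hxz : ∀ i ≥ N + K, (x.append hmono N z).1 i = 1 := fun i hi => by
    simp [append, show ¬ i < N by omega, hK (i - N) (by omega)]
  rw [boxMulMap_eq_prodUpTo _ hxz, boxMulMap_eq_prodUpTo x hx, boxMulMap_eq_prodUpTo z hK,
    prodUpTo_add]
  congr 1
  · simp only [prodUpTo]
    congr 1
    exact List.map_congr_left fun i hi => by
      rw [x.append_apply_of_lt hmono _ (List.mem_range.mp hi)]
  · simp only [prodUpTo, append_apply_add, Subgroup.coe_inclusion]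

end Append

section Gauge

variable (t : SmallBox H)

def gaugeCoord (k : ℕ) (y : H k) : H k :=
  ⟨t.prodUpTo k * y * (t.prodUpTo (k + 1))⁻¹,
    mul_mem (mul_mem (t.prodUpTo_mem hmono k.le_succ) y.2) (inv_mem (t.prodUpTo_mem hmono le_rfl))⟩

variable {t} (ht : boxMulMap H t = 1)

def gauge (z : SmallBox H) : SmallBox H :=
  ⟨fun k => gaugeCoord hmono t k (z.1 k), by
    obtain ⟨K, hK⟩ := z.2
    obtain ⟨M, hM⟩ := t.2
    refine ⟨max K M, fun k hk => Subtype.ext ?_⟩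
    simp only [gaugeCoord, hK k (le_of_max_le_left hk),
      prodUpTo_eq_one ht (K := k) fun i hi => hM i (by omega),
      prodUpTo_eq_one ht (K := k + 1) fun i hi => hM i (by omega),
      OneMemClass.coe_one, mul_one, inv_one]⟩

lemma coe_gauge_apply (z : SmallBox H) (k : ℕ) :
    ((gauge hmono ht z).1 k : G) = t.prodUpTo k * z.1 k * (t.prodUpTo (k + 1))⁻¹ := rfl

lemma prodUpTo_gauge (z : SmallBox H) (K : ℕ) :
    (gauge hmono ht z).prodUpTo K = z.prodUpTo K * (t.prodUpTo K)⁻¹ := by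
  induction K with
  | zero => simp
  | succ K ih =>
    simp only [prodUpTo_succ, ih, coe_gauge_apply]
    group

lemma boxMulMap_gauge (z : SmallBox H) : boxMulMap H (gauge hmono ht z) = boxMulMap H z := by
  obtain ⟨K₁, hK₁⟩ := (gauge hmono ht z).2
  obtain ⟨K₂, hK₂⟩ := z.2
  obtain ⟨M, hM⟩ := t.2
  set K := max (max K₁ K₂) M
  rw [boxMulMap_eq_prodUpTo _ (K := K) fun i hi => hK₁ i (by omega),
    boxMulMap_eq_prodUpTo z (K := K) fun i hi => hK₂ i (by omega), prodUpTo_gauge,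
    prodUpTo_eq_one ht fun i hi => hM i (by omega), inv_one, mul_one]

lemma gauge_self : gauge hmono ht t = boxOne H := by
  ext k
  simp [coe_gauge_apply, prodUpTo_succ, boxOne]

end Gauge

section Topology

variable [TopologicalSpace G]

-- `SmallBox H` is a subtype of a product, so it would otherwise get the product topology.
attribute [local instance] smallBoxTop

lemma isOpen_setOf_forall_mem {U : ∀ i, Set (H i)} (hU : ∀ i, IsOpen (U i)) :
    IsOpen {z : SmallBox H | ∀ i, z.1 i ∈ U i} := by
  have hbox : IsOpen[boxTopology fun i => H i] (Set.univ.pi U) := .basic _ ⟨U, hU, rfl⟩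
  have := @isOpen_induced _ _ (boxTopology fun i => H i) (Subtype.val : SmallBox H → _) _ hbox
  simp only [Set.preimage, Set.mem_pi, Set.mem_univ, true_implies] at this
  exact this

lemma continuous_of_isOpen_setOf_forall_mem {X : Type*} [TopologicalSpace X]
    {f : X → SmallBox H}
    (hf : ∀ U : ∀ i, Set (H i), (∀ i, IsOpen (U i)) → IsOpen {a | ∀ i, (f a).1 i ∈ U i}) :
    Continuous f := by
  refine continuous_induced_rng.mpr (continuous_generateFrom_iff.mpr ?_)
  rintro _ ⟨U, hU, rfl⟩
  simpa [Set.preimage, Set.mem_pi] using hf U hU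

lemma continuous_append (x : SmallBox H) (N : ℕ) : Continuous (x.append hmono N) := by
  refine continuous_of_isOpen_setOf_forall_mem fun U hU => ?_
  by_cases hxU : ∀ i < N, x.1 i ∈ U i
  · have hincl {j : ℕ} (h : H j ≤ H (N + j)) : Continuous (Subgroup.inclusion h) :=
      continuous_subtype_val.subtype_mk _
    convert isOpen_setOf_forall_mem fun j =>
      (hU (N + j)).preimage (hincl (hmono (Nat.le_add_left j N))) using 1
    ext z
    refine ⟨fun h j => by simpa only [append_apply_add, Set.mem_preimage] using h (N + j),
      fun h i => ?_⟩
    rcases lt_or_ge i N with hi | hi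
    · rw [x.append_apply_of_lt hmono _ hi]
      exact hxU i hi
    · obtain ⟨j, rfl⟩ := Nat.exists_eq_add_of_le hi
      simpa only [append_apply_add, Set.mem_preimage] using h j
  · convert isOpen_empty
    push Not at hxU
    obtain ⟨i, hi, hxi⟩ := hxU
    ext z
    simpa using ⟨i, by rwa [x.append_apply_of_lt hmono _ hi]⟩

lemma continuous_gauge [IsTopologicalGroup G] {t : SmallBox H} (ht : boxMulMap H t = 1) :
    Continuous (gauge hmono ht) :=
  continuous_of_isOpen_setOf_forall_mem fun U hU =>
    isOpen_setOf_forall_mem (U := fun k => gaugeCoord hmono t k ⁻¹' U k) fun k =>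
      (hU k).preimage (Continuous.subtype_mk (by fun_prop) _)

end Topology

end SmallBox

theorem isOpenMap_of_forall_exists_section {X G : Type*} [TopologicalSpace X] [Group G]
    [TopologicalSpace G] [IsTopologicalGroup G] {p : X → G} {V : Set G} (hV : V ∈ 𝓝 1)
    (h : ∀ x, ∃ σ : V → X, Continuous σ ∧ σ ⟨1, mem_of_mem_nhds hV⟩ = x ∧
      ∀ v, p (σ v) = p x * v) :
    IsOpenMap p := by
  refine fun U hU => isOpen_iff_mem_nhds.mpr ?_
  rintro _ ⟨x, hxU, rfl⟩
  obtain ⟨σ, hσ, hσ1, hpσ⟩ := h x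
  obtain ⟨O, hO, hOσ⟩ := mem_nhds_subtype V _ _ |>.mp <|
    (hU.preimage hσ).mem_nhds (show σ ⟨1, _⟩ ∈ U from hσ1 ▸ hxU)
  have hOV : (p x * ·) '' (O ∩ V) ∈ 𝓝 (p x) := by
    simpa only [map_mul_left_nhds_one] using image_mem_map (m := (p x * ·)) (inter_mem hO hV)
  refine mem_of_superset hOV ?_
  rintro _ ⟨o, ⟨hoO, hoV⟩, rfl⟩
  exact ⟨σ ⟨o, hoV⟩, hOσ hoO, hpσ _⟩

theorem stmt8_general {G : Type*} [Group G] [TopologicalSpace G] [IsTopologicalGroup G]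
    (H : ℕ → Subgroup G) (hmono : Monotone H)
    (V : Set G) (hV : V ∈ nhds (1 : G)) (s : V → SmallBox H)
    (hs : @Continuous V (SmallBox H) _ (smallBoxTop H) s)
    (hps : ∀ v : V, boxMulMap H (s v) = (v : G)) :
    @IsOpenMap (SmallBox H) G (smallBoxTop H) _ (boxMulMap H) := by
  let := smallBoxTop H
  refine isOpenMap_of_forall_exists_section hV fun x => ?_
  have ht : boxMulMap H (s ⟨1, mem_of_mem_nhds hV⟩) = 1 := hps _
  obtain ⟨N, hN⟩ := x.2
  refine ⟨fun v => x.append hmono N (SmallBox.gauge hmono ht (s v)),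
    (x.continuous_append hmono N).comp ((SmallBox.continuous_gauge hmono ht).comp hs), ?_,
    fun v => ?_⟩
  · dsimp only
    rw [SmallBox.gauge_self, x.append_boxOne hmono hN]
  · rw [x.boxMulMap_append hmono hN, SmallBox.boxMulMap_gauge, hps]

/-- if the multiplication map `p : ⊡ᵢ Gᵢ → G` admits a continuous
local section at the identity, then `p` is an open map. -/
theorem stmt8 {G : Type*} [Group G] [TopologicalSpace G] [IsTopologicalGroup G]
    (H : ℕ → Subgroup G) (hcl : ∀ i, IsClosed (H i : Set G)) (hmono : Monotone H)
    (hunion : ∀ g : G, ∃ i, g ∈ H i)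
    (V : Set G) (hV : V ∈ nhds (1 : G)) (s : V → SmallBox H)
    (hs : @Continuous V (SmallBox H) _ (smallBoxTop H) s)
    (hps : ∀ v : V, boxMulMap H (s v) = (v : G)) :
    @IsOpenMap (SmallBox H) G (smallBoxTop H) _ (boxMulMap H) :=
  stmt8_general H hmono V hV s hs hps
end

section
/- Let (Gᵢ) be a tower of closed subgroups of a topological group G with union G. If the multiplication map p : ⊡ᵢ Gᵢ → G is open, then G is the direct limit of the tower (Gᵢ) in the category of topological groups; that is, any group homomorphism h : G → H into a topological group H is continuous whenever each restriction h|Gᵢ is continuous. -/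
/-!
Since `h` is a homomorphism it suffices to prove continuity at `1`. Given a neighbourhood `V` of
`1` in `K`, choose neighbourhoods `V = W₀, W₁, …` of `1` with `Wₙ₊₁ Wₙ₊₁ ⊆ Wₙ`; then any product
`k₀ k₁ ⋯ kₙ` with `kⱼ ∈ Wⱼ₊₁` lies in `V`. The box `∏ᵢ (h|Gᵢ)⁻¹(Wᵢ₊₁)` is open in `⊡ᵢ Gᵢ` by
continuity of the restrictions, so its image under the open map `p` is a neighbourhood of `1`
in `G`, and `h` maps it into `V`.
-/

open Filter Topology

theorem exists_seq_nhds_one_mul_subset {M : Type*} [MulOneClass M] [TopologicalSpace M]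
    [ContinuousMul M] {V : Set M} (hV : V ∈ 𝓝 1) :
    ∃ W : ℕ → Set M, W 0 = V ∧ (∀ n, W n ∈ 𝓝 1) ∧
      ∀ n, ∀ a ∈ W (n + 1), ∀ b ∈ W (n + 1), a * b ∈ W n := by
  let next : {S : Set M // S ∈ 𝓝 1} → {S : Set M // S ∈ 𝓝 1} := fun S =>
    ⟨(exists_nhds_one_split S.2).choose, (exists_nhds_one_split S.2).choose_spec.1⟩
  let W : ℕ → {S : Set M // S ∈ 𝓝 1} := fun n => Nat.rec ⟨V, hV⟩ (fun _ S => next S) n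
  exact ⟨fun n => (W n).1, rfl, fun n => (W n).2,
    fun n => (exists_nhds_one_split (W n).2).choose_spec.2⟩

theorem List.prod_range_map_mem_of_mul_mem {M : Type*} [Monoid M] {W : ℕ → Set M}
    (one_mem : ∀ n, (1 : M) ∈ W n) (mul_mem : ∀ n, ∀ a ∈ W (n + 1), ∀ b ∈ W (n + 1), a * b ∈ W n)
    {N k : ℕ} {f : ℕ → M} (hf : ∀ j < N, f j ∈ W (j + k + 1)) :
    ((List.range N).map f).prod ∈ W k := by
  induction N generalizing k f with
  | zero => simpa using one_mem k
  | succ N ih =>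
    rw [List.range_succ_eq_map, List.map_cons, List.prod_cons, List.map_map]
    refine mul_mem k _ (by simpa using hf 0 N.succ_pos) _ (ih fun j hj => ?_)
    simpa only [Function.comp_apply, Nat.add_right_comm, Nat.add_assoc] using hf (j + 1) (by omega)

section SmallBox

variable {G : Type*} [Group G] [TopologicalSpace G] (H : ℕ → Subgroup G)

theorem isOpen_smallBox_preimage_pi {U : ∀ i, Set (H i)} (hU : ∀ i, IsOpen (U i)) :
    IsOpen[smallBoxTop H] (Subtype.val ⁻¹' Set.univ.pi U) :=
  @isOpen_induced_iff _ _ (boxTopology fun i => H i) _ _ |>.mpr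
    ⟨_, TopologicalSpace.isOpen_generateFrom_of_mem ⟨U, hU, rfl⟩, rfl⟩

omit [TopologicalSpace G] in
theorem boxMulMap_boxOne : boxMulMap H (boxOne H) = 1 :=
  List.prod_eq_one fun x hx => by
    obtain ⟨i, -, rfl⟩ := List.mem_map.mp hx
    rfl

omit [TopologicalSpace G] in
theorem map_boxMulMap {M : Type*} [Monoid M] (h : G →* M) (x : SmallBox H) :
    h (boxMulMap H x) = ((List.range x.2.choose).map fun i => h (x.1 i)).prod := by
  rw [boxMulMap, map_list_prod, List.map_map]
  rfl

theorem continuousAt_comp_boxMulMap_boxOne {M : Type*} [Monoid M] [TopologicalSpace M]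
    [ContinuousMul M] (h : G →* M) (hres : ∀ i, Continuous fun x : H i => h (x : G)) :
    @ContinuousAt _ _ (smallBoxTop H) _ (h ∘ boxMulMap H) (boxOne H) := by
  intro V hV
  rw [Function.comp_apply, boxMulMap_boxOne, map_one] at hV
  obtain ⟨W, rfl, hW, mul_mem⟩ := exists_seq_nhds_one_mul_subset hV
  let U : ∀ i, Set (H i) := fun i => (fun x : H i => h x) ⁻¹' interior (W (i + 1))
  have hU : ∀ i, IsOpen (U i) := fun i => isOpen_interior.preimage (hres i)
  let := smallBoxTop H
  refine mem_map.mpr (mem_nhds_iff.mpr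
    ⟨_, fun x hx => ?_, isOpen_smallBox_preimage_pi H hU, fun i _ => ?_⟩)
  · show h (boxMulMap H x) ∈ W 0
    rw [map_boxMulMap]
    exact List.prod_range_map_mem_of_mul_mem (fun n => mem_of_mem_nhds (hW n)) mul_mem
      fun j _ => interior_subset (hx j trivial)
  · simp [U, boxOne, mem_interior_iff_mem_nhds, hW]

end SmallBox

theorem IsOpenMap.continuousAt_of_comp {X Y Z : Type*} [TopologicalSpace X] [TopologicalSpace Y]
    [TopologicalSpace Z] {f : X → Y} {g : Y → Z} (hf : IsOpenMap f) {x : X}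
    (hg : ContinuousAt (g ∘ f) x) : ContinuousAt g (f x) :=
  (tendsto_map'_iff.mpr hg).mono_left (hf.nhds_le x)

theorem stmt9_general {G : Type*} [Group G] [TopologicalSpace G] [IsTopologicalGroup G]
    (H : ℕ → Subgroup G)
    (hopen : @IsOpenMap (SmallBox H) G (smallBoxTop H) _ (boxMulMap H))
    {K : Type*} [Group K] [TopologicalSpace K] [IsTopologicalGroup K]
    (h : G →* K) (hres : ∀ i, Continuous fun x : H i => h (x : G)) :
    Continuous h := by
  refine continuous_of_continuousAt_one h ?_
  rw [← boxMulMap_boxOne H]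
  exact @IsOpenMap.continuousAt_of_comp _ _ _ (smallBoxTop H) _ _ _ _ hopen _
    (continuousAt_comp_boxMulMap_boxOne H h hres)

/-- if the multiplication map `p : ⊡ᵢ Gᵢ → G` is open, then `G`
is the direct limit of the tower `(Gᵢ)` in the category of topological groups:
every group homomorphism `h : G → K` to a topological group whose restriction
to each `Gᵢ` is continuous is itself continuous. -/
theorem stmt9 {G : Type*} [Group G] [TopologicalSpace G] [IsTopologicalGroup G]
    (H : ℕ → Subgroup G) (hcl : ∀ i, IsClosed (H i : Set G)) (hmono : Monotone H)
    (hunion : ∀ g : G, ∃ i, g ∈ H i)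
    (hopen : @IsOpenMap (SmallBox H) G (smallBoxTop H) _ (boxMulMap H))
    {K : Type*} [Group K] [TopologicalSpace K] [IsTopologicalGroup K]
    (h : G →* K) (hres : ∀ i, Continuous fun x : H i => h (x : G)) :
    Continuous h :=
  stmt9_general H hopen h hres
end

section
/- The small box product ⊡ᵢ (Xᵢ, xᵢ) of a sequence of pointed spaces is strongly contractible at its base point x = (xᵢ)ᵢ if and only if each Xᵢ is strongly contractible at xᵢ. -/
/-- The small box product of a sequence of pointed spaces: sequences eventually
equal to the base point. -/
abbrev SmallBoxP (X : ℕ → Type*) (pt : ∀ i, X i) :=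
  {x : ∀ i, X i // ∃ N, ∀ i ≥ N, x i = pt i}

/-- The topology of the small box product: subspace of the box topology. -/
def smallBoxPTop (X : ℕ → Type*) [∀ i, TopologicalSpace (X i)] (pt : ∀ i, X i) :
    TopologicalSpace (SmallBoxP X pt) :=
  TopologicalSpace.induced Subtype.val (boxTopology X)

/-- A space `X` is strongly contractible at `x` if `X` contracts to `x` in
itself keeping `x` fixed throughout the homotopy. -/
def StronglyContractibleAt {X : Type*} [TopologicalSpace X] (x : X) : Prop :=
  ∃ H : X × unitInterval → X, Continuous H ∧ (∀ y, H (y, 0) = y) ∧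
    (∀ y, H (y, 1) = x) ∧ ∀ t, H (x, t) = x

open Set Function Topology

attribute [local instance] smallBoxPTop

section BoxTopology

variable {X : ℕ → Type*} [∀ i, TopologicalSpace (X i)]

theorem isOpen_boxTopology_pi {U : ∀ i, Set (X i)} (hU : ∀ i, IsOpen (U i)) :
    IsOpen[boxTopology X] (univ.pi U) :=
  TopologicalSpace.GenerateOpen.basic _ ⟨U, hU, rfl⟩

theorem continuous_boxTopology_iff {Z : Type*} [TopologicalSpace Z] {f : Z → ∀ i, X i} :
    Continuous[_, boxTopology X] f ↔
      ∀ U : ∀ i, Set (X i), (∀ i, IsOpen (U i)) → IsOpen (f ⁻¹' univ.pi U) := by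
  rw [boxTopology, continuous_generateFrom_iff]
  exact ⟨fun h U hU => h _ ⟨U, hU, rfl⟩, fun h _ ⟨U, hU, hs⟩ => hs ▸ h U hU⟩

end BoxTopology

namespace SmallBoxP

variable {X : ℕ → Type*} {pt : ∀ i, X i}

variable (pt) in
def single (i : ℕ) (z : X i) : SmallBoxP X pt :=
  ⟨update pt i z, i + 1, fun _ hj => update_of_ne (by omega) _ _⟩

@[simp]
theorem single_apply_self (i : ℕ) (z : X i) : (single pt i z).1 i = z :=
  update_self _ _ _

theorem single_base (i : ℕ) : single pt i (pt i) = ⟨pt, 0, fun _ _ => rfl⟩ :=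
  Subtype.ext (update_eq_self _ _)

variable [∀ i, TopologicalSpace (X i)]

theorem isOpen_preimage_val_pi {U : ∀ i, Set (X i)} (hU : ∀ i, IsOpen (U i)) :
    IsOpen (Subtype.val ⁻¹' univ.pi U : Set (SmallBoxP X pt)) :=
  isOpen_induced (t := boxTopology X) (isOpen_boxTopology_pi hU)

theorem continuous_iff {Z : Type*} [TopologicalSpace Z] {f : Z → SmallBoxP X pt} :
    Continuous f ↔
      ∀ U : ∀ i, Set (X i), (∀ i, IsOpen (U i)) → IsOpen ((fun z => (f z).1) ⁻¹' univ.pi U) :=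
  continuous_induced_rng.trans continuous_boxTopology_iff

theorem continuous_apply (i : ℕ) : Continuous fun y : SmallBoxP X pt => y.1 i := by
  refine continuous_def.2 fun V hV => ?_
  have hpre : (fun y : SmallBoxP X pt => y.1 i) ⁻¹' V =
      Subtype.val ⁻¹' univ.pi (update (fun _ => univ) i V) := by
    rw [← eval_preimage]; rfl
  rw [hpre]
  refine isOpen_preimage_val_pi fun j => ?_
  rcases eq_or_ne j i with rfl | hj
  · simpa using hV
  · simp [hj]

theorem continuous_single (i : ℕ) : Continuous (single pt i) := by
  refine continuous_iff.2 fun U hU => ?_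
  have hpre : (fun z => (single pt i z).1) ⁻¹' univ.pi U =
      {_z | pt ∈ (univ \ {i}).pi U} ∩ U i := by
    ext z
    simp only [single, mem_preimage, update_mem_pi_iff, mem_univ, forall_const, mem_inter_iff,
      mem_ofPred_eq]
  rw [hpre]
  exact isOpen_const.inter (hU i)

end SmallBoxP

theorem exists_isOpen_prod_subset_preimage {A K B : Type*} [TopologicalSpace A]
    [TopologicalSpace K] [CompactSpace K] [TopologicalSpace B] {f : A × K → B}
    (hf : Continuous f) {U : Set B} (hU : IsOpen U) {a : A} {k : K} (hak : f (a, k) ∈ U) :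
    ∃ W J, IsOpen W ∧ IsOpen J ∧ a ∈ W ∧ k ∈ J ∧ W ×ˢ J ⊆ f ⁻¹' U ∧
      ((∀ s, f (a, s) ∈ U) → J = univ) := by
  by_cases hfiber : ∀ s, f (a, s) ∈ U
  · obtain ⟨W, J, hW, -, haW, hJ, hWJ⟩ := generalized_tube_lemma isCompact_singleton
      isCompact_univ (hU.preimage hf) (by rintro ⟨_, s⟩ ⟨rfl, -⟩; exact hfiber s)
    exact ⟨W, univ, hW, isOpen_univ, haW rfl, trivial, fun p hp => hWJ ⟨hp.1, hJ hp.2⟩,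
      fun _ => rfl⟩
  · obtain ⟨W, J, hW, hJ, haW, hkJ, hWJ⟩ := isOpen_prod_iff.1 (hU.preimage hf) a k hak
    exact ⟨W, J, hW, hJ, haW, hkJ, hWJ, fun h => absurd h hfiber⟩

theorem StronglyContractibleAt.of_retraction {Y Z : Type*} [TopologicalSpace Y]
    [TopologicalSpace Z] {y : Y} {z : Z} (h : StronglyContractibleAt y) {s : Z → Y}
    {r : Y → Z} (hs : Continuous s) (hr : Continuous r) (hrs : ∀ x, r (s x) = x)
    (hsz : s z = y) : StronglyContractibleAt z := by
  obtain ⟨H, hc, h0, h1, hy⟩ := h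
  have hry : r y = z := hsz ▸ hrs z
  exact ⟨fun p => r (H (s p.1, p.2)), hr.comp (hc.comp (by fun_prop)),
    fun x => by simp only [h0, hrs], fun x => by simp only [h1, hry],
    fun t => by simp only [hsz, hy, hry]⟩

namespace SmallBoxP

variable {X Y : ℕ → Type*} [∀ i, TopologicalSpace (X i)] [∀ i, TopologicalSpace (Y i)]
  {pt : ∀ i, X i} {q : ∀ i, Y i} {K : Type*} [TopologicalSpace K]

def homotopy (H : ∀ i, X i × K → Y i) (hH : ∀ i k, H i (pt i, k) = q i) :
    SmallBoxP X pt × K → SmallBoxP Y q :=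
  fun p => ⟨fun i => H i (p.1.1 i, p.2), p.1.2.imp fun _ hN i hi => by simp only [hN i hi, hH]⟩

theorem continuous_homotopy [CompactSpace K] {H : ∀ i, X i × K → Y i}
    {hH : ∀ i k, H i (pt i, k) = q i} (hc : ∀ i, Continuous (H i)) :
    Continuous (homotopy H hH) := by
  refine continuous_iff.2 fun U hU => isOpen_iff_forall_mem_open.2 ?_
  rintro ⟨y, k⟩ hyk
  replace hyk : ∀ i, H i (y.1 i, k) ∈ U i := fun i => hyk i trivial
  obtain ⟨N, hN⟩ := y.2
  have hbox : ∀ i, ∃ W J, IsOpen W ∧ IsOpen J ∧ y.1 i ∈ W ∧ k ∈ J ∧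
      W ×ˢ J ⊆ H i ⁻¹' U i ∧ (N ≤ i → J = univ) := fun i => by
    obtain ⟨W, J, hW, hJ, hyW, hkJ, hWJ, huniv⟩ :=
      exists_isOpen_prod_subset_preimage (hc i) (hU i) (hyk i)
    refine ⟨W, J, hW, hJ, hyW, hkJ, hWJ, fun hi => huniv fun s => ?_⟩
    simpa only [hN i hi, hH] using hyk i
  choose W J hW hJ hyW hkJ hWJ huniv using hbox
  refine ⟨(Subtype.val ⁻¹' univ.pi W) ×ˢ ⋂ i ∈ Finset.range N, J i, ?_,
    (isOpen_preimage_val_pi hW).prod (isOpen_biInter_finset fun i _ => hJ i),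
    fun i _ => hyW i, mem_iInter₂.2 fun i _ => hkJ i⟩
  rintro ⟨y', k'⟩ ⟨hy', hk'⟩ i -
  refine hWJ i ⟨hy' i trivial, ?_⟩
  rcases lt_or_ge i N with hi | hi
  · exact mem_iInter₂.1 hk' i (Finset.mem_range.2 hi)
  · rw [huniv i hi]
    trivial

theorem stronglyContractibleAt_base (h : ∀ i, StronglyContractibleAt (pt i)) :
    StronglyContractibleAt (⟨pt, 0, fun _ _ => rfl⟩ : SmallBoxP X pt) := by
  choose H hc h0 h1 hpt using h
  exact ⟨homotopy H hpt, continuous_homotopy hc, fun y => Subtype.ext (funext fun i => h0 i _),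
    fun y => Subtype.ext (funext fun i => h1 i _), fun t => Subtype.ext (funext fun i => hpt i t)⟩

theorem stronglyContractibleAt_apply
    (h : StronglyContractibleAt (⟨pt, 0, fun _ _ => rfl⟩ : SmallBoxP X pt)) (i : ℕ) :
    StronglyContractibleAt (pt i) :=
  h.of_retraction (continuous_single i) (continuous_apply i) (single_apply_self i)
    (single_base i)

end SmallBoxP

/-- the small box product `⊡ᵢ (Xᵢ, xᵢ)` is strongly contractible
at its base point iff each `Xᵢ` is strongly contractible at `xᵢ`. -/
theorem stmt11 (X : ℕ → Type*) [∀ i, TopologicalSpace (X i)] (pt : ∀ i, X i) :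
    @StronglyContractibleAt (SmallBoxP X pt) (smallBoxPTop X pt)
        ⟨pt, 0, fun _ _ => rfl⟩ ↔
      ∀ i, StronglyContractibleAt (pt i) :=
  ⟨SmallBoxP.stronglyContractibleAt_apply, SmallBoxP.stronglyContractibleAt_base⟩
end

section
/- Let X be a compact metrizable space, K and L disjoint compact subsets of X, and Y an absolute retract (AR). Then for any continuous map f : X → Y there exists a continuous map s : C(K,Y) → C(X,Y) (compact-open topologies) such that for all g ∈ C(K,Y): s(g)|K = g, s(g)|L = f|L, and s(f|K) = f. -/
universe u

/-- An absolute retract (AR): a metrizable space `Y` such that every continuous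
map into `Y` from a closed subset of a metrizable space extends over the whole
space. -/
def IsAR (Y : Type u) [TopologicalSpace Y] : Prop :=
  TopologicalSpace.MetrizableSpace Y ∧
    ∀ (Z : Type u) [TopologicalSpace Z], TopologicalSpace.MetrizableSpace Z →
      ∀ A : Set Z, IsClosed A → ∀ g : C(A, Y), ∃ G : C(Z, Y), ∀ a : A, G a = g a

/-! The section is obtained by extending, with the AR property, the map
`(x, g) ↦ g x` on `K × C(K,Y)`, `(x, g) ↦ f x` on `L × C(K,Y)` and `(x, f|K) ↦ f x`
from this closed subset of `X × C(K,Y)`, which is metrizable because `K` is compact,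
to all of it, and then currying. The three prescriptions are compatible because `K ∩ L = ∅`. -/

open Set

theorem IsAR.exists_extension_of_continuousOn {Y : Type u} [TopologicalSpace Y] (hY : IsAR Y)
    {Z : Type u} [TopologicalSpace Z] [TopologicalSpace.MetrizableSpace Z] {A : Set Z}
    (hA : IsClosed A) {φ : Z → Y} (hφ : ContinuousOn φ A) :
    ∃ G : C(Z, Y), EqOn G φ A := by
  obtain ⟨G, hG⟩ := hY.2 Z inferInstance A hA ⟨A.domRestrict φ, hφ.domRestrict⟩
  exact ⟨G, fun z hz => hG ⟨z, hz⟩⟩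

namespace ContinuousMap

variable {X Y : Type*} [TopologicalSpace X] [TopologicalSpace Y]

noncomputable def replaceOn (f : C(X, Y)) (K : Set X) (g : C(K, Y)) (x : X) : Y :=
  open Classical in if hx : x ∈ K then g ⟨x, hx⟩ else f x

variable (f : C(X, Y)) {K : Set X}

theorem replaceOn_of_mem (g : C(K, Y)) {x : X} (hx : x ∈ K) :
    f.replaceOn K g x = g ⟨x, hx⟩ :=
  dif_pos hx

theorem replaceOn_of_notMem (g : C(K, Y)) {x : X} (hx : x ∉ K) : f.replaceOn K g x = f x :=
  dif_neg hx

@[simp]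
theorem replaceOn_restrict : f.replaceOn K (f.restrict K) = f := by
  funext x
  by_cases hx : x ∈ K
  · exact f.replaceOn_of_mem _ hx
  · exact f.replaceOn_of_notMem _ hx

theorem continuousOn_replaceOn_mem_prod [LocallyCompactSpace K] :
    ContinuousOn (fun p : X × C(K, Y) => f.replaceOn K p.2 p.1) (K ×ˢ univ) := by
  rw [continuousOn_iff_continuous_domRestrict]
  have hpair : Continuous fun p : (K ×ˢ univ : Set (X × C(K, Y))) =>
      ((p : X × C(K, Y)).2, (⟨p.1.1, p.2.1⟩ : K)) := by fun_prop
  exact (continuous_eval.comp hpair).congr fun p => (f.replaceOn_of_mem _ p.2.1).symm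

theorem continuousOn_replaceOn_compl_prod :
    ContinuousOn (fun p : X × C(K, Y) => f.replaceOn K p.2 p.1) (Kᶜ ×ˢ univ) :=
  (f.continuous.comp continuous_fst).continuousOn.congr fun _ hp =>
    f.replaceOn_of_notMem _ hp.1

theorem continuousOn_replaceOn_prod_restrict :
    ContinuousOn (fun p : X × C(K, Y) => f.replaceOn K p.2 p.1) (univ ×ˢ {f.restrict K}) :=
  (f.continuous.comp continuous_fst).continuousOn.congr fun p hp => by
    rw [show p.2 = f.restrict K from hp.2, replaceOn_restrict]
    rfl

end ContinuousMap

theorem stmt13_general {X : Type u} [TopologicalSpace X]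
    [TopologicalSpace.MetrizableSpace X]
    {Y : Type u} [TopologicalSpace Y] (hY : IsAR Y)
    (K L : Set X) (hK : IsCompact K) (hL : IsCompact L) (hKL : Disjoint K L)
    (f : C(X, Y)) :
    ∃ s : C(C(K, Y), C(X, Y)),
      (∀ g : C(K, Y), ∀ k : K, s g k = g k) ∧
      (∀ g : C(K, Y), ∀ l ∈ L, s g l = f l) ∧
      s (f.restrict K) = f := by
  have := hY.1
  let : MetricSpace Y := TopologicalSpace.metrizableSpaceMetric Y
  have : CompactSpace K := isCompact_iff_compactSpace.mp hK
  have hA : IsClosed ((K ∪ L) ×ˢ univ ∪ univ ×ˢ {f.restrict K}) :=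
    ((hK.isClosed.union hL.isClosed).prod isClosed_univ).union
      (isClosed_univ.prod isClosed_singleton)
  have hφ : ContinuousOn (fun p : X × C(K, Y) => f.replaceOn K p.2 p.1)
      ((K ∪ L) ×ˢ univ ∪ univ ×ˢ {f.restrict K}) := by
    refine ContinuousOn.union_of_isClosed ?_ f.continuousOn_replaceOn_prod_restrict
      ((hK.isClosed.union hL.isClosed).prod isClosed_univ) (isClosed_univ.prod isClosed_singleton)
    rw [union_prod]
    exact f.continuousOn_replaceOn_mem_prod.union_of_isClosed
      (f.continuousOn_replaceOn_compl_prod.mono (prod_mono hKL.subset_compl_left le_rfl))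
      (hK.isClosed.prod isClosed_univ) (hL.isClosed.prod isClosed_univ)
  obtain ⟨G, hG⟩ := hY.exists_extension_of_continuousOn hA hφ
  refine ⟨(G.comp ContinuousMap.prodSwap).curry, fun g k => ?_, fun g l hl => ?_, ?_⟩
  · exact (hG (Or.inl ⟨Or.inl k.2, trivial⟩)).trans (f.replaceOn_of_mem g k.2)
  · exact (hG (Or.inl ⟨Or.inr hl, trivial⟩)).trans
      (f.replaceOn_of_notMem g (hKL.subset_compl_left hl))
  · ext x
    exact (hG (show (x, f.restrict K) ∈ _ from Or.inr ⟨trivial, rfl⟩)).trans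
      (congrFun f.replaceOn_restrict x)

/-- for X compact metrizable, K, L disjoint compact subsets and Y
an AR, every `f ∈ C(X,Y)` admits a continuous map `s : C(K,Y) → C(X,Y)`
(compact-open topologies) with `s(g)|K = g`, `s(g)|L = f|L` and `s(f|K) = f`. -/
theorem stmt13 {X : Type u} [TopologicalSpace X] [CompactSpace X]
    [TopologicalSpace.MetrizableSpace X]
    {Y : Type u} [TopologicalSpace Y] (hY : IsAR Y)
    (K L : Set X) (hK : IsCompact K) (hL : IsCompact L) (hKL : Disjoint K L)
    (f : C(X, Y)) :
    ∃ s : C(C(K, Y), C(X, Y)),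
      (∀ g : C(K, Y), ∀ k : K, s g k = g k) ∧
      (∀ g : C(K, Y), ∀ l ∈ L, s g l = f l) ∧
      s (f.restrict K) = f :=
  stmt13_general hY K L hK hL hKL f
end

section
/- Let X be a compact metrizable space, K, L disjoint compact subsets, and Y an ANR. For any continuous f : X → Y there exist a neighborhood 𝒰 of f|K in C(K,Y) (compact-open topology) and a continuous map s : 𝒰 → C(X,Y) such that s(g)|K = g and s(g)|L = f|L for all g ∈ 𝒰, and s(f|K) = f. -/
universe u

/-- An absolute neighborhood retract (ANR): a metrizable space `Y` such that
every continuous map into `Y` from a closed subset `A` of a metrizable space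
extends continuously over some open neighborhood of `A`. -/
def IsANR (Y : Type u) [TopologicalSpace Y] : Prop :=
  TopologicalSpace.MetrizableSpace Y ∧
    ∀ (Z : Type u) [TopologicalSpace Z], TopologicalSpace.MetrizableSpace Z →
      ∀ A : Set Z, IsClosed A → ∀ g : C(A, Y),
        ∃ W : Set Z, IsOpen W ∧ A ⊆ W ∧
          ∃ G : C(W, Y), ∀ (a : Z) (ha : a ∈ A) (haW : a ∈ W), G ⟨a, haW⟩ = g ⟨a, ha⟩

open Set Filter Topology

/-!
On the closed subset `C(K, Y) × K ∪ {f|K} × X ∪ C(K, Y) × L` of the metrizable space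
`C(K, Y) × X`, the map sending `(g, x)` to `g x` for `x ∈ K` and to `f x` otherwise is
continuous. Since `Y` is an ANR it extends over an open neighbourhood `W`, and since `X` is
compact, the tube lemma gives a neighbourhood `U` of `f|K` with `U × X ⊆ W`; currying the
extension on `U × X` gives `s`.
-/

theorem IsANR.exists_continuousOn_extension {Y : Type u} [TopologicalSpace Y] (hY : IsANR Y)
    {Z : Type u} [TopologicalSpace Z] [TopologicalSpace.MetrizableSpace Z]
    {A : Set Z} (hA : IsClosed A) {F : Z → Y} (hF : ContinuousOn F A) :
    ∃ W : Set Z, IsOpen W ∧ A ⊆ W ∧ ∃ G : Z → Y, ContinuousOn G W ∧ EqOn G F A := by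
  classical
  obtain ⟨W, hW, hAW, G, hG⟩ := hY.2 Z inferInstance A hA ⟨A.domRestrict F, hF.domRestrict⟩
  refine ⟨W, hW, hAW, fun z ↦ if h : z ∈ W then G ⟨z, h⟩ else F z, ?_, fun a ha ↦ ?_⟩
  · rw [continuousOn_iff_continuous_domRestrict]
    convert G.continuous using 1
    ext ⟨z, hz⟩
    simp [hz]
  · exact (dif_pos (hAW ha)).trans (hG a ha (hAW ha))

theorem ContinuousOn.exists_mem_nhds_continuousMap_curry {Z X Y : Type*} [TopologicalSpace Z]
    [TopologicalSpace X] [CompactSpace X] [TopologicalSpace Y] {G : Z × X → Y}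
    {W : Set (Z × X)} (hG : ContinuousOn G W) (hW : IsOpen W) {z₀ : Z}
    (hz₀ : ∀ x, (z₀, x) ∈ W) :
    ∃ U ∈ 𝓝 z₀, ∃ s : C(U, C(X, Y)), ∀ z x, s z x = G (z, x) := by
  have hU : ∀ᶠ z in 𝓝 z₀, ∀ x ∈ univ, (z, x) ∈ W :=
    isCompact_univ.eventually_forall_of_forall_eventually fun x _ ↦ hW.mem_nhds (hz₀ x)
  refine ⟨{z | ∀ x, (z, x) ∈ W}, hU.mono fun _ hz x ↦ hz x (mem_univ x),
    ContinuousMap.curry ⟨fun p ↦ G (p.1, p.2), ?_⟩, fun _ _ ↦ rfl⟩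
  exact hG.comp_continuous (by fun_prop) fun p ↦ p.1.2 p.2

section EvalOrApply

variable {X Y : Type*} [TopologicalSpace X] [TopologicalSpace Y] {K : Set X}

open Classical in
noncomputable def evalOrApply (K : Set X) (f : C(X, Y)) (p : C(K, Y) × X) : Y :=
  if h : p.2 ∈ K then p.1 ⟨p.2, h⟩ else f p.2

theorem evalOrApply_of_mem (f : C(X, Y)) (g : C(K, Y)) {x : X} (hx : x ∈ K) :
    evalOrApply K f (g, x) = g ⟨x, hx⟩ :=
  dif_pos hx

theorem evalOrApply_of_notMem (f : C(X, Y)) (g : C(K, Y)) {x : X} (hx : x ∉ K) :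
    evalOrApply K f (g, x) = f x :=
  dif_neg hx

theorem evalOrApply_restrict (f : C(X, Y)) (x : X) :
    evalOrApply K f (f.restrict K, x) = f x := by
  by_cases hx : x ∈ K
  · exact evalOrApply_of_mem f _ hx
  · exact evalOrApply_of_notMem f _ hx

theorem continuousOn_evalOrApply [LocallyCompactSpace X] [T1Space Y] (f : C(X, Y)) {L : Set X}
    (hK : IsClosed K) (hL : IsClosed L) (hKL : Disjoint K L) :
    ContinuousOn (evalOrApply K f) (univ ×ˢ K ∪ ({f.restrict K} ×ˢ univ ∪ univ ×ˢ L)) := by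
  have hEval : ContinuousOn (evalOrApply K f) (univ ×ˢ K) := by
    have := hK.locallyCompactSpace
    rw [continuousOn_iff_continuous_domRestrict]
    have : (univ ×ˢ K).domRestrict (evalOrApply K f) = fun p ↦ p.1.1 ⟨p.1.2, p.2.2⟩ :=
      funext fun p ↦ evalOrApply_of_mem f _ p.2.2
    rw [this]
    exact (continuous_fst.comp continuous_subtype_val).eval
      ((continuous_snd.comp continuous_subtype_val).subtype_mk _)
  have hApply : ContinuousOn (evalOrApply K f) ({f.restrict K} ×ˢ univ ∪ univ ×ˢ L) := by
    refine (f.continuous.comp continuous_snd).continuousOn.congr ?_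
    rintro ⟨g, x⟩ (⟨rfl, -⟩ | ⟨-, hx⟩)
    · exact evalOrApply_restrict f x
    · exact evalOrApply_of_notMem f g (hKL.notMem_of_mem_right hx)
  exact hEval.union_of_isClosed hApply (isClosed_univ.prod hK)
    ((isClosed_singleton.prod isClosed_univ).union (isClosed_univ.prod hL))

end EvalOrApply

/-- for X compact metrizable, K, L disjoint compact subsets and Y
an ANR, every `f ∈ C(X,Y)` admits a neighborhood `U` of `f|K` in `C(K,Y)` and a
continuous map `s : U → C(X,Y)` with `s(g)|K = g`, `s(g)|L = f|L` for `g ∈ U`,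
and `s(f|K) = f`. -/
theorem stmt14 {X : Type u} [TopologicalSpace X] [CompactSpace X]
    [TopologicalSpace.MetrizableSpace X]
    {Y : Type u} [TopologicalSpace Y] (hY : IsANR Y)
    (K L : Set X) (hK : IsCompact K) (hL : IsCompact L) (hKL : Disjoint K L)
    (f : C(X, Y)) :
    ∃ U : Set C(K, Y), U ∈ nhds (f.restrict K) ∧
      ∃ s : C(U, C(X, Y)),
        (∀ g : U, ∀ k : K, s g k = (g : C(K, Y)) k) ∧
        (∀ g : U, ∀ l ∈ L, s g l = f l) ∧
        ∀ hf : f.restrict K ∈ U, s ⟨f.restrict K, hf⟩ = f := by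
  have := hY.1
  -- with a metric on `Y` and `K` compact, `C(K, Y)` is metrizable
  let := TopologicalSpace.metrizableSpaceMetric Y
  have : CompactSpace K := isCompact_iff_compactSpace.mp hK
  obtain ⟨W, hW, hAW, G, hG, hGF⟩ := hY.exists_continuousOn_extension
    ((isClosed_univ.prod hK.isClosed).union
      ((isClosed_singleton.prod isClosed_univ).union (isClosed_univ.prod hL.isClosed)))
    (continuousOn_evalOrApply f hK.isClosed hL.isClosed hKL)
  obtain ⟨U, hU, s, hs⟩ :=
    hG.exists_mem_nhds_continuousMap_curry hW fun _ ↦ hAW (.inr (.inl ⟨mem_singleton _, trivial⟩))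
  refine ⟨U, hU, s, fun g k ↦ ?_, fun g l hl ↦ ?_, fun hf ↦ ContinuousMap.ext fun x ↦ ?_⟩
  · rw [hs, hGF (.inl ⟨trivial, k.2⟩), evalOrApply_of_mem f _ k.2]
  · rw [hs, hGF (.inr (.inr ⟨trivial, hl⟩)),
      evalOrApply_of_notMem f _ (hKL.notMem_of_mem_right hl)]
  · rw [hs, hGF (.inr (.inl ⟨mem_singleton _, trivial⟩)), evalOrApply_restrict]
end

section
/- Every subspace of a perfectly paracompact space is perfectly paracompact. -/
/-- A space is perfectly paracompact if it is paracompact Hausdorff and every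
open subset is an Fσ-set. -/
def PerfectlyParacompact (X : Type*) [TopologicalSpace X] : Prop :=
  ParacompactSpace X ∧ T2Space X ∧
    ∀ U : Set X, IsOpen U → ∃ F : ℕ → Set X, (∀ n, IsClosed (F n)) ∧ U = ⋃ n, F n

/-!
Paracompactness of a subspace `A` reduces to the ambient space: a cover of `A` by traces of open
sets `v i` only needs a precise open refinement of the `v i` covering `A` that is locally finite at
the points of `A`. As `U = ⋃ i, v i` is an open Fσ set of the normal space `X`, it is the union of
the interiors of countably many closed sets `C n ⊆ U`. Refine the cover of `C 0 ∪ ⋯ ∪ C n`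
locally finitely and remove `C 0 ∪ ⋯ ∪ C (n - 1)` from this `n`-th refinement: a point of
`interior (C n)` then has a neighbourhood meeting only the first `n + 1` refinements.
Open sets of `A` are traces of open, hence Fσ, sets of `X`.
-/

universe u

open Set Filter Topology

def LocallyFiniteAt {ι X : Type*} [TopologicalSpace X] (f : ι → Set X) (x : X) : Prop :=
  ∃ t ∈ 𝓝 x, {i | (f i ∩ t).Nonempty}.Finite

section

variable {X : Type*} [TopologicalSpace X]

theorem IsOpen.exists_closed_subset_iUnion_interior [NormalSpace X] {U : Set X} (hU : IsOpen U)
    {F : ℕ → Set X} (hF : ∀ n, IsClosed (F n)) (hUF : U = ⋃ n, F n) :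
    ∃ C : ℕ → Set X, (∀ n, IsClosed (C n)) ∧ (∀ n, C n ⊆ U) ∧ U ⊆ ⋃ n, interior (C n) := by
  choose V hVo hFV hVU using fun n =>
    normal_exists_closure_subset (hF n) hU (hUF ▸ subset_iUnion F n)
  refine ⟨fun n => closure (V n), fun _ => isClosed_closure, hVU, ?_⟩
  rw [hUF]
  exact iUnion_mono fun n => (hFV n).trans (hVo n).subset_interior_closure

theorem exists_precise_refinement_locallyFiniteAt_iUnion_interior [ParacompactSpace X]
    {ι : Type*} {v : ι → Set X} (hv : ∀ i, IsOpen (v i)) {C : ℕ → Set X}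
    (hC : ∀ n, IsClosed (C n)) (hCv : ∀ n, C n ⊆ ⋃ i, v i) :
    ∃ w : ι → Set X, (∀ i, IsOpen (w i)) ∧ (∀ i, w i ⊆ v i) ∧ (⋃ n, C n) ⊆ ⋃ i, w i ∧
      ∀ x ∈ ⋃ n, interior (C n), LocallyFiniteAt w x := by
  classical
  choose W hWo hCW hWlf hWv using fun n =>
    precise_refinement_set ((finite_Iic n).isClosed_biUnion fun k _ => hC k) v hv
      (iUnion₂_subset fun k _ => hCv k)
  let D : ℕ → Set X := fun n => ⋃ k < n, C k
  have hD : ∀ n, IsClosed (D n) := fun n => (finite_Iio n).isClosed_biUnion fun k _ => hC k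
  refine ⟨fun i => ⋃ n, W n i \ D n, fun i => isOpen_iUnion fun n => (hWo n i).sdiff (hD n),
    fun i => iUnion_subset fun n => sdiff_subset.trans (hWv n i), ?_, ?_⟩
  · intro x hx
    have hex : ∃ n, x ∈ C n := mem_iUnion.1 hx
    obtain ⟨i, hi⟩ :=
      mem_iUnion.1 (hCW _ (mem_iUnion₂.2 ⟨_, mem_Iic.2 le_rfl, Nat.find_spec hex⟩))
    refine mem_iUnion.2 ⟨i, mem_iUnion.2 ⟨_, hi, fun hxD => ?_⟩⟩
    obtain ⟨k, hk, hxk⟩ := mem_iUnion₂.1 hxD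
    exact Nat.find_min hex hk hxk
  · intro x hx
    obtain ⟨n, hn⟩ := mem_iUnion.1 hx
    have hsmall : ∀ᶠ t in (𝓝 x).smallSets,
        t ⊆ interior (C n) ∧ ∀ m ∈ Iic n, {i | (W m i ∩ t).Nonempty}.Finite :=
      (eventually_smallSets_subset.2 (isOpen_interior.mem_nhds hn)).and
        ((finite_Iic n).eventually_all.2 fun m _ => (hWlf m).eventually_smallSets x)
    obtain ⟨t, ht, htp⟩ := eventually_smallSets.1 hsmall
    obtain ⟨htC, htW⟩ := htp t subset_rfl
    refine ⟨t, ht, ((finite_Iic n).biUnion htW).subset ?_⟩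
    rintro i ⟨y, hyw, hyt⟩
    obtain ⟨m, hyW, hyD⟩ := mem_iUnion.1 hyw
    have hmn : m ≤ n := by
      by_contra! hnm
      exact hyD (mem_iUnion₂.2 ⟨n, hnm, interior_subset (htC hyt)⟩)
    exact mem_biUnion hmn ⟨y, hyW, hyt⟩

end

theorem paracompactSpace_subtype_of_forall_precise_refinement {X : Type u} [TopologicalSpace X]
    (A : Set X)
    (h : ∀ (ι : Type u) (v : ι → Set X), (∀ i, IsOpen (v i)) → A ⊆ ⋃ i, v i →
      ∃ w : ι → Set X, (∀ i, IsOpen (w i)) ∧ (∀ i, w i ⊆ v i) ∧ A ⊆ ⋃ i, w i ∧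
        ∀ x ∈ A, LocallyFiniteAt w x) :
    ParacompactSpace A := by
  refine ⟨fun ι s hs hsA => ?_⟩
  choose v hv hvs using fun i => isOpen_induced_iff.1 (hs i)
  have hAv : A ⊆ ⋃ i, v i := fun x hx => by
    simpa [← hvs] using (hsA ▸ mem_univ (⟨x, hx⟩ : A) : _ ∈ ⋃ i, s i)
  obtain ⟨w, hw, hwv, hAw, hlf⟩ := h ι v hv hAv
  refine ⟨ι, fun i => (↑) ⁻¹' w i, fun i => (hw i).preimage continuous_subtype_val, ?_, ?_,
    fun i => ⟨i, hvs i ▸ preimage_mono (hwv i)⟩⟩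
  · simpa [eq_univ_iff_forall] using fun x hx => mem_iUnion.1 (hAw hx)
  · rintro ⟨x, hx⟩
    obtain ⟨t, ht, htf⟩ := hlf x hx
    refine ⟨(↑) ⁻¹' t, continuous_subtype_val.continuousAt.preimage_mem_nhds ht, htf.subset ?_⟩
    rintro i ⟨y, hyw, hyt⟩
    exact ⟨y, hyw, hyt⟩

/-- every subspace of a perfectly paracompact space is perfectly
paracompact. -/
theorem stmt18 {X : Type*} [TopologicalSpace X] (h : PerfectlyParacompact X)
    (A : Set X) : PerfectlyParacompact A := by
  obtain ⟨hpara, ht2, hFσ⟩ := h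
  refine ⟨paracompactSpace_subtype_of_forall_precise_refinement A fun ι v hv hAv => ?_,
    inferInstance, fun U hU => ?_⟩
  · have hVo : IsOpen (⋃ i, v i) := isOpen_iUnion hv
    obtain ⟨F, hF, hVF⟩ := hFσ _ hVo
    obtain ⟨C, hC, hCV, hVC⟩ := hVo.exists_closed_subset_iUnion_interior hF hVF
    obtain ⟨w, hw, hwv, hCw, hlf⟩ :=
      exists_precise_refinement_locallyFiniteAt_iUnion_interior hv hC hCV
    have hAC : A ⊆ ⋃ n, interior (C n) := hAv.trans hVC
    exact ⟨w, hw, hwv, (hAC.trans (iUnion_mono fun n => interior_subset)).trans hCw,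
      fun x hx => hlf x (hAC hx)⟩
  · obtain ⟨V, hV, rfl⟩ := isOpen_induced_iff.1 hU
    obtain ⟨F, hF, rfl⟩ := hFσ V hV
    exact ⟨fun n => (↑) ⁻¹' F n, fun n => (hF n).preimage continuous_subtype_val,
      preimage_iUnion⟩
end
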